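/- Let d = g ⊕ g* be the double of an n-Lie bialgebra with the bracket [x_1+ξ_1,...,x_n+ξ_n]_d = [x_1,...,x_n] + Σ_i (−1)^{n−i} ad*_{x̂_i}ξ_i + [ξ_1,...,ξ_n]_{g*} + Σ_i (−1)^{n−i} Ad*_{ξ̂_i}x_i, and let ⟨x+ξ, y+η⟩_d = ⟨η,x⟩ + ⟨ξ,y⟩. Then the bilinear form ⟨·,·⟩_d is invariant: ⟨[u_1,...,u_n]_d, t⟩_d + ⟨u_n, [u_1,...,u_{n-1},t]_d⟩_d = 0 for all u_1,...,u_n, t ∈ d. -/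

import Mathlib

open scoped TensorProduct

noncomputable section

variable {K V : Type*} [Field K] [CharZero K] [AddCommGroup V] [Module K V]

/-- `ad_{x₁,…,x_{n-1}} : V → V`, `y ↦ [x₁,…,x_{n-1},y]`. -/
def adMap {m : ℕ} (b : MultilinearMap K (fun _ : Fin (m + 1) => V) V)
    (X : Fin m → V) : V →ₗ[K] V := b.curryRight X

/-- The coadjoint action `ad*`: `⟨ad*_X ξ, x⟩ = −⟨ξ, [X, x]⟩`. -/
def coad {m : ℕ} (b : MultilinearMap K (fun _ : Fin (m + 1) => V) V)
    (X : Fin m → V) : Module.Dual K V →ₗ[K] Module.Dual K V := -(adMap b X).dualMap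

/-- `1^{⊗(i-1)} ⊗ f ⊗ 1^{⊗(n-i)}` acting on `⊗ⁿ V` (position `i`, `0`-indexed). -/
def tmap {n : ℕ} (i : Fin n) (f : V →ₗ[K] V) :
    (⨂[K] _ : Fin n, V) →ₗ[K] (⨂[K] _ : Fin n, V) :=
  PiTensorProduct.map (Function.update (fun _ => LinearMap.id) i f)

/-- Pairing of `⊗ⁿ V` with an `n`-tuple of functionals. -/
def pairV {n : ℕ} (ξ : Fin n → Module.Dual K V) : (⨂[K] _ : Fin n, V) →ₗ[K] K :=
  PiTensorProduct.lift ((MultilinearMap.mkPiAlgebra K (Fin n) K).compLinearMap ξ)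

/-- `z ↦ [z, y₁,…,y_{n-1}]`, the bracket acting in the first slot. -/
def firstSlot {m : ℕ} (b : MultilinearMap K (fun _ : Fin (m + 1) => V) V)
    (y : Fin m → V) : V →ₗ[K] V where
  toFun z := b.curryLeft z y
  map_add' z z' := by simp only [map_add, MultilinearMap.add_apply]
  map_smul' r z := by simp only [map_smul, MultilinearMap.smul_apply, RingHom.id_apply]

/-- The bracket on the double `d = g ⊕ g*`:
`[x₁+ξ₁,…,xₙ+ξₙ] = [x₁,…,xₙ] + Σᵢ (−1)^{n−i} Ad*_{ξ̂ᵢ} xᵢ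
 + [ξ₁,…,ξₙ]_{g*} + Σᵢ (−1)^{n−i} ad*_{x̂ᵢ} ξᵢ`. -/
def doubleBracket {m : ℕ} (b : MultilinearMap K (fun _ : Fin (m + 1) => V) V)
    (c : MultilinearMap K (fun _ : Fin (m + 1) => Module.Dual K V) (Module.Dual K V))
    (Coad : (Fin m → Module.Dual K V) → V →ₗ[K] V)
    (u : Fin (m + 1) → V × Module.Dual K V) : V × Module.Dual K V :=
  (b (fun i => (u i).1) + ∑ i : Fin (m + 1), ((-1 : K) ^ (m - (i : ℕ))) •
      Coad (fun j => (u (i.succAbove j)).2) ((u i).1),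
   c (fun i => (u i).2) + ∑ i : Fin (m + 1), ((-1 : K) ^ (m - (i : ℕ))) •
      coad b (fun j => (u (i.succAbove j)).1) ((u i).2))

/-- The canonical bilinear form on the double `d = g ⊕ g*`:
`⟨x+ξ, y+η⟩ = ⟨η,x⟩ + ⟨ξ,y⟩`. -/
def doubleForm (u v : V × Module.Dual K V) : K := v.2 u.1 + u.2 v.1

/-!
Expanding `⟨[u₁,…,uₙ], t⟩` through the defining identities of `Ad*` and `ad*` leaves only
brackets of the direct product `g × g*`:
`⟨t, [u₁,…,uₙ]⟩ - Σᵢ (−1)^{n−i} ⟨uᵢ, [ûᵢ, t]⟩`.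
Doing the same for `⟨[u₁,…,u_{n-1},t], uₙ⟩`, the `i = n` summand of each expansion cancels the
leading term of the other, and for `i < n` the two brackets differ by a transposition of their
last two arguments, so they cancel by skew-symmetry.
-/
theorem Fin.snoc_comp_succAbove_castSucc_swap {α : Type*} {m : ℕ} (x : Fin (m + 2) → α) (z : α)
    (j : Fin (m + 1)) :
    Fin.snoc ((Fin.snoc (fun i => x i.castSucc) z : Fin (m + 2) → α) ∘ j.castSucc.succAbove)
        (x (Fin.last (m + 1))) =
      Fin.snoc (x ∘ j.castSucc.succAbove) z ∘
        Equiv.swap (Fin.last m).castSucc (Fin.last (m + 1)) := by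
  have hlast : j.castSucc.succAbove (Fin.last m) = Fin.last (m + 1) :=
    Fin.succAbove_castSucc_of_le _ _ (Fin.le_last j) |>.trans (Fin.succ_last m)
  funext p
  induction p using Fin.lastCases with
  | last => simp [hlast]
  | cast i =>
    induction i using Fin.lastCases with
    | last => simp [hlast]
    | cast k =>
      have hfix : Equiv.swap (Fin.last m).castSucc (Fin.last (m + 1)) k.castSucc.castSucc =
          k.castSucc.castSucc :=
        Equiv.swap_apply_of_ne_of_ne (by simp [Fin.ext_iff, k.isLt.ne])
          (by simp [Fin.ext_iff]; omega)
      simp [hfix, Fin.castSucc_succAbove_castSucc]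

section

omit [CharZero K]

def prodBracket {m : ℕ} (b : MultilinearMap K (fun _ : Fin m => V) V)
    (c : MultilinearMap K (fun _ : Fin m => Module.Dual K V) (Module.Dual K V))
    (u : Fin m → V × Module.Dual K V) : V × Module.Dual K V :=
  (b fun i => (u i).1, c fun i => (u i).2)

theorem prodBracket_snoc {m : ℕ} (b : MultilinearMap K (fun _ : Fin (m + 1) => V) V)
    (c : MultilinearMap K (fun _ : Fin (m + 1) => Module.Dual K V) (Module.Dual K V))
    (u : Fin m → V × Module.Dual K V) (s : V × Module.Dual K V) :
    prodBracket b c (Fin.snoc u s) =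
      (b (Fin.snoc (fun i => (u i).1) s.1), c (Fin.snoc (fun i => (u i).2) s.2)) :=
  Prod.ext (congrArg b (Fin.comp_snoc Prod.fst u s)) (congrArg c (Fin.comp_snoc Prod.snd u s))

theorem prodBracket_comp_swap {m : ℕ} {b : MultilinearMap K (fun _ : Fin m => V) V}
    {c : MultilinearMap K (fun _ : Fin m => Module.Dual K V) (Module.Dual K V)}
    (hb : ∀ (v : Fin m → V) (i j : Fin m), i ≠ j → v i = v j → b v = 0)
    (hc : ∀ (ξ : Fin m → Module.Dual K V) (i j : Fin m), i ≠ j → ξ i = ξ j → c ξ = 0)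
    (u : Fin m → V × Module.Dual K V) {i j : Fin m} (hij : i ≠ j) :
    prodBracket b c (u ∘ Equiv.swap i j) = -prodBracket b c u := by
  let B : V [⋀^Fin m]→ₗ[K] V := ⟨b, fun v i j h hne => hb v i j hne h⟩
  let C : Module.Dual K V [⋀^Fin m]→ₗ[K] Module.Dual K V := ⟨c, fun ξ i j h hne => hc ξ i j hne h⟩
  exact Prod.ext (B.map_swap (fun k => (u k).1) hij) (C.map_swap (fun k => (u k).2) hij)

theorem doubleForm_comm (u v : V × Module.Dual K V) : doubleForm u v = doubleForm v u :=
  add_comm _ _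

theorem doubleForm_neg_right (u v : V × Module.Dual K V) :
    doubleForm u (-v) = -doubleForm u v := by
  simp only [doubleForm, Prod.fst_neg, Prod.snd_neg, map_neg, LinearMap.neg_apply, neg_add]

theorem doubleForm_doubleBracket {m : ℕ} {b : MultilinearMap K (fun _ : Fin (m + 1) => V) V}
    {c : MultilinearMap K (fun _ : Fin (m + 1) => Module.Dual K V) (Module.Dual K V)}
    {Coad : (Fin m → Module.Dual K V) → V →ₗ[K] V}
    (hCoad : ∀ (Ξ : Fin m → Module.Dual K V) (x : V) (η : Module.Dual K V),
      η (Coad Ξ x) = -(c (Fin.snoc Ξ η)) x)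
    (u : Fin (m + 1) → V × Module.Dual K V) (t : V × Module.Dual K V) :
    doubleForm (doubleBracket b c Coad u) t =
      doubleForm t (prodBracket b c u) - ∑ i : Fin (m + 1), (-1 : K) ^ (m - (i : ℕ)) *
        doubleForm (u i) (prodBracket b c (Fin.snoc (u ∘ i.succAbove) t)) := by
  simp only [doubleForm, doubleBracket, prodBracket_snoc, coad, adMap, map_add, map_sum,
    map_smul, LinearMap.add_apply, LinearMap.sum_apply, LinearMap.smul_apply, LinearMap.neg_apply,
    LinearMap.dualMap_apply, MultilinearMap.curryRight_apply, smul_eq_mul, hCoad]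
  simp only [prodBracket, Function.comp_apply, mul_neg, Finset.sum_neg_distrib, mul_add,
    Finset.sum_add_distrib]
  ring

end

theorem double_form_invariant_general {q : ℕ}
    (b : MultilinearMap K (fun _ : Fin (q + 2) => V) V)
    (halt : ∀ (v : Fin (q + 2) → V) (i j : Fin (q + 2)), i ≠ j → v i = v j → b v = 0)
    (c : MultilinearMap K (fun _ : Fin (q + 2) => Module.Dual K V) (Module.Dual K V))
    (caltern : ∀ (ξ : Fin (q + 2) → Module.Dual K V) (i j : Fin (q + 2)),
      i ≠ j → ξ i = ξ j → c ξ = 0)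
    (Coad : (Fin (q + 1) → Module.Dual K V) → V →ₗ[K] V)
    (hCoad : ∀ (Ξ : Fin (q + 1) → Module.Dual K V) (x : V) (η : Module.Dual K V),
      η (Coad Ξ x) = -(c (Fin.snoc Ξ η)) x) :
    ∀ (u : Fin (q + 2) → V × Module.Dual K V) (t : V × Module.Dual K V),
      doubleForm (doubleBracket b c Coad u) t +
        doubleForm (u (Fin.last (q + 1)))
          (doubleBracket b c Coad (Fin.snoc (fun i : Fin (q + 1) => u i.castSucc) t)) = 0 := by
  intro u t
  have hswap : ∀ j : Fin (q + 1),
      prodBracket b c (Fin.snoc ((Fin.snoc (fun i => u i.castSucc) t : Fin (q + 2) → _) ∘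
        j.castSucc.succAbove) (u (Fin.last (q + 1)))) =
      -prodBracket b c (Fin.snoc (u ∘ j.castSucc.succAbove) t) := fun j => by
    rw [Fin.snoc_comp_succAbove_castSucc_swap,
      prodBracket_comp_swap halt caltern _ (Fin.castSucc_lt_last _).ne]
  have hinit : Fin.snoc (fun i => u i.castSucc) (u (Fin.last (q + 1))) = u := Fin.snoc_init_self u
  rw [doubleForm_comm (u _), doubleForm_doubleBracket hCoad, doubleForm_doubleBracket hCoad,
    Fin.sum_univ_castSucc (n := q + 1), Fin.sum_univ_castSucc (n := q + 1)]
  simp only [Fin.snoc_castSucc, Fin.snoc_last, Fin.snoc_comp_castSucc, Fin.succAbove_last,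
    Fin.val_last, Nat.sub_self, pow_zero, one_mul, hswap, hinit, doubleForm_neg_right, mul_neg,
    Finset.sum_neg_distrib, Function.comp_def u Fin.castSucc]
  ring

/-- On the double `d = g ⊕ g*` of a double construction `n`-Lie bialgebra
(`n = q+2`), the canonical bilinear form `⟨x+ξ, y+η⟩ = ⟨η,x⟩ + ⟨ξ,y⟩` is
invariant: `⟨[u₁,…,uₙ], t⟩ + ⟨uₙ, [u₁,…,u_{n-1}, t]⟩ = 0`. -/
theorem double_form_invariant {q : ℕ} [FiniteDimensional K V]
    (b : MultilinearMap K (fun _ : Fin (q + 2) => V) V)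
    (halt : ∀ (v : Fin (q + 2) → V) (i j : Fin (q + 2)), i ≠ j → v i = v j → b v = 0)
    (hFJ : ∀ (x : Fin (q + 1) → V) (y : Fin (q + 2) → V),
      b (Fin.snoc x (b y)) = ∑ i, b (Function.update y i (b (Fin.snoc x (y i)))))
    (c : MultilinearMap K (fun _ : Fin (q + 2) => Module.Dual K V) (Module.Dual K V))
    (caltern : ∀ (ξ : Fin (q + 2) → Module.Dual K V) (i j : Fin (q + 2)),
      i ≠ j → ξ i = ξ j → c ξ = 0)
    (cFJ : ∀ (ξ : Fin (q + 1) → Module.Dual K V) (η : Fin (q + 2) → Module.Dual K V),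
      c (Fin.snoc ξ (c η)) = ∑ i, c (Function.update η i (c (Fin.snoc ξ (η i)))))
    (γ : V →ₗ[K] ⨂[K] _ : Fin (q + 2), V)
    (hcompat : ∀ (ξ : Fin (q + 2) → Module.Dual K V) (x : V), c ξ x = pairV ξ (γ x))
    (Coad : (Fin (q + 1) → Module.Dual K V) → V →ₗ[K] V)
    (hCoad : ∀ (Ξ : Fin (q + 1) → Module.Dual K V) (x : V) (η : Module.Dual K V),
      η (Coad Ξ x) = -(c (Fin.snoc Ξ η)) x)
    (hR1 : ∀ x : Fin (q + 2) → V,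
      γ (b x) = ∑ i : Fin (q + 2), ((-1 : K) ^ (q + 1 - (i : ℕ))) •
        tmap 0 (adMap b (x ∘ i.succAbove)) (γ (x i)))
    (hcentroid : ∀ x : Fin (q + 2) → V,
      γ (b x) = tmap 0 (firstSlot b (fun j => x j.succ)) (γ (x 0)))
    (hloc1 : ∀ (z : V) (Y : Fin (q + 1) → V) (j : Fin (q + 1)),
      tmap (j.castSucc) (adMap b Y) (γ z) + tmap (Fin.last (q + 1)) (adMap b Y) (γ z) = 0)
    (hloc2 : ∀ (y : Fin q → V) (z w : V) (i k : Fin (q + 2)), i ≠ k →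
      tmap i (adMap b (Fin.snoc y w)) (γ z) + tmap k (adMap b (Fin.snoc y z)) (γ w) = 0) :
    ∀ (u : Fin (q + 2) → V × Module.Dual K V) (t : V × Module.Dual K V),
      doubleForm (doubleBracket b c Coad u) t +
        doubleForm (u (Fin.last (q + 1)))
          (doubleBracket b c Coad (Fin.snoc (fun i : Fin (q + 1) => u i.castSucc) t)) = 0 :=
  double_form_invariant_general b halt c caltern Coad hCoad
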